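/- arXiv:1903.06011 — 4 statements merged into one kernel-verified Lean document; each statement's English description precedes it below -/
import Mathlib

section
/- A one-dimensional cellular automaton with local rule R: S^m → S is irreversible for every lattice size n ∈ ℕ (i.e., strictly irreversible) if and only if it is irreversible for lattice size n = 1. -/
/-- The global function of a 1-D cellular automaton with `d` states,
neighborhood size `m`, left radius `lr`, on a periodic lattice of size `n`. -/
def caGlobal (d m lr n : ℕ) (R : (Fin m → Fin d) → Fin d)
    (c : ZMod n → Fin d) : ZMod n → Fin d :=
  fun i => R fun k => c (i + ((k : ℕ) : ZMod n) - (lr : ZMod n))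

/-- A 1-D CA is strictly irreversible (irreversible for every lattice size
`n ≥ 1`) if and only if it is irreversible for lattice size `n = 1`. -/
theorem strictly_irreversible_iff_irreversible_for_one
    (d m lr : ℕ) (R : (Fin m → Fin d) → Fin d) :
    (∀ n : ℕ, 0 < n → ¬ Function.Bijective (caGlobal d m lr n R)) ↔
      ¬ Function.Bijective (caGlobal d m lr 1 R) := by
  set g : Fin d → Fin d := fun x => R (fun _ => x) with hg
  constructor
  · intro h; exact h 1 one_pos
  · intro h n hn
    -- first: g is not injective
    have key : ¬ Function.Injective g := by
      intro hinj
      apply h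
      have hgb : Function.Bijective g := Finite.injective_iff_bijective.mp hinj
      have heq : caGlobal d m lr 1 R =
          (Equiv.arrowCongr (Equiv.refl (ZMod 1)) (Equiv.ofBijective g hgb)) := by
        funext c i
        simp only [caGlobal, Equiv.arrowCongr_apply, Equiv.refl_symm, Equiv.coe_refl,
          Function.comp, Equiv.ofBijective_apply, hg]
        congr 1
        funext k
        exact congrArg c (Subsingleton.elim _ _)
      rw [heq]
      exact (Equiv.arrowCongr (Equiv.refl (ZMod 1)) (Equiv.ofBijective g hgb)).bijective
    obtain ⟨a, b, hab, hne⟩ := Function.not_injective_iff.mp key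
    intro hbij
    haveI : NeZero n := ⟨hn.ne'⟩
    have hc : (fun _ => a : ZMod n → Fin d) = (fun _ => b) := by
      apply hbij.injective
      funext i
      simpa [caGlobal, hg] using hab
    exact hne (congrFun hc 0)
end

section
/- The elementary cellular automaton rule 150, defined by R(a,b,c) = a XOR b XOR c, has injective global function G_n under periodic boundary if and only if n is not divisible by 3. -/
lemma eca150_apply (n : ℕ) (c : ZMod n → Fin 2) (i : ZMod n) :
    caGlobal 2 3 1 n (fun v => v 0 + v 1 + v 2) c i = c (i - 1) + c i + c (i + 1) := by
  simp [caGlobal]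
  ring_nf

/-- ECA rule 150, `R(a,b,c) = a XOR b XOR c`, has injective global
function `Gₙ` iff `3 ∤ n`. -/
theorem eca150_injective_iff (n : ℕ) (hn : 0 < n) :
    Function.Injective (caGlobal 2 3 1 n (fun v => v 0 + v 1 + v 2)) ↔ ¬ (3 ∣ n) := by
  haveI : NeZero n := ⟨hn.ne'⟩
  constructor
  · -- injective → ¬ 3 ∣ n
    intro hinj h3
    set φ : ZMod n →+* ZMod 3 := ZMod.castHom h3 (ZMod 3)
    set f : ZMod 3 → Fin 2 := fun t => if t = 0 then 0 else 1 with hf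
    set c : ZMod n → Fin 2 := fun i => f (φ i) with hc
    have hGc : caGlobal 2 3 1 n (fun v => v 0 + v 1 + v 2) c
        = caGlobal 2 3 1 n (fun v => v 0 + v 1 + v 2) (fun _ => 0) := by
      funext i
      rw [eca150_apply, eca150_apply]
      have h1 : φ (i - 1) = φ i - 1 := by simp
      have h2 : φ (i + 1) = φ i + 1 := by simp
      simp only [hc, h1, h2]
      have key : ∀ t : ZMod 3, f (t - 1) + f t + f (t + 1) = 0 + 0 + 0 := by decide
      exact key (φ i)
    have := hinj hGc
    have h1 : c 1 = 0 := by rw [this]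
    have : φ (1 : ZMod n) = 1 := map_one φ
    simp only [hc, this, hf] at h1
    have : n ≠ 1 := by rintro rfl; omega
    norm_num at h1
  · -- ¬ 3 ∣ n → injective
    intro h3 a b hab
    set d : ZMod n → Fin 2 := fun i => a i + b i with hd
    have hrel : ∀ i : ZMod n, d (i - 1) + d i + d (i + 1) = 0 := by
      intro i
      have h := congrFun hab i
      rw [eca150_apply, eca150_apply] at h
      have key : ∀ x1 x2 x3 y1 y2 y3 : Fin 2, x1 + x2 + x3 = y1 + y2 + y3 →
          (x1 + y1) + (x2 + y2) + (x3 + y3) = 0 := by decide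
      exact key _ _ _ _ _ _ h
    have hstep : ∀ j : ZMod n, d (j + 3) = d j := by
      intro j
      have r1 := hrel (j + 1)
      have r2 := hrel (j + 2)
      have e1 : j + 1 - 1 = j := by ring
      have e2 : j + 2 - 1 = j + 1 := by ring
      have e3 : j + 2 + 1 = j + 3 := by ring
      have e4 : j + 1 + 1 = j + 2 := by ring
      rw [e1, e4] at r1
      rw [e2, e3] at r2
      have key : ∀ a b c e : Fin 2, a + b + c = 0 → b + c + e = 0 → e = a := by decide
      exact key _ _ _ _ r1 r2
    have hmul : ∀ (t : ℕ) (j : ZMod n), d (j + 3 * (t : ZMod n)) = d j := by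
      intro t
      induction t with
      | zero => simp
      | succ t ih =>
        intro j
        have : j + 3 * ((t + 1 : ℕ) : ZMod n) = (j + 3) + 3 * (t : ZMod n) := by
          push_cast; ring
        rw [this, ih, hstep]
    -- 3 is invertible mod n
    have hcop : Nat.Coprime 3 n := (Nat.Prime.coprime_iff_not_dvd (by norm_num)).mpr h3
    obtain ⟨b, hb⟩ : ∃ b : ZMod n, (3 : ZMod n) * b = 1 := by
      refine ⟨((ZMod.unitOfCoprime 3 hcop)⁻¹ : (ZMod n)ˣ), ?_⟩
      have h30 : ((ZMod.unitOfCoprime 3 hcop : (ZMod n)ˣ) : ZMod n) = 3 := by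
        rw [ZMod.coe_unitOfCoprime]; push_cast; ring
      rw [← h30]
      exact_mod_cast (ZMod.unitOfCoprime 3 hcop).mul_inv
    have hone : ∀ i : ZMod n, d (i + 1) = d i := by
      intro i
      have h1 : (1 : ZMod n) = 3 * ((b.val : ℕ) : ZMod n) := by
        rw [ZMod.natCast_val, ZMod.cast_id]; exact hb.symm
      rw [h1]
      exact hmul b.val i
    have hconstN : ∀ t : ℕ, d ((t : ℕ) : ZMod n) = d 0 := by
      intro t
      induction t with
      | zero => simp
      | succ t ih =>
        have : ((t + 1 : ℕ) : ZMod n) = ((t : ℕ) : ZMod n) + 1 := by push_cast; ring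
        rw [this, hone, ih]
    have hconst : ∀ i : ZMod n, d i = d 0 := by
      intro i
      have : ((i.val : ℕ) : ZMod n) = i := by rw [ZMod.natCast_val, ZMod.cast_id]
      rw [← this, hconstN]
    have hd0 : d 0 = 0 := by
      have r := hrel 0
      rw [hconst (0 - 1), hconst (0 + 1)] at r
      have key : ∀ x : Fin 2, x + x + x = 0 → x = 0 := by decide
      exact key _ r
    funext i
    have : d i = 0 := by rw [hconst, hd0]
    have key : ∀ x y : Fin 2, x + y = 0 → x = y := by decide
    exact key _ _ this
end

section
/- The elementary cellular automaton rule 105, defined by R(a,b,c) = 1 XOR a XOR b XOR c, has bijective global function G_n under periodic boundary if and only if n is not divisible by 3. -/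
lemma caGlobal_apply (n : ℕ) (c : ZMod n → Fin 2) (i : ZMod n) :
    caGlobal 2 3 1 n (fun v => 1 + v 0 + v 1 + v 2) c i
      = 1 + c (i - 1) + c i + c (i + 1) := by
  have h0 : i + (((0:Fin 3) : ℕ) : ZMod n) - ((1:ℕ) : ZMod n) = i - 1 := by
    simp [Fin.val_zero]
  have h1 : i + (((1:Fin 3) : ℕ) : ZMod n) - ((1:ℕ) : ZMod n) = i := by
    simp [Fin.val_one]
  have h2 : i + (((2:Fin 3) : ℕ) : ZMod n) - ((1:ℕ) : ZMod n) = i + 1 := by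
    simp [Fin.val_two]; ring
  show 1 + c _ + c _ + c _ = _
  rw [h0, h1, h2]

/-- ECA rule 105, `R(a,b,c) = 1 XOR a XOR b XOR c`, has bijective global
function `Gₙ` iff `3 ∤ n`. -/
theorem eca105_bijective_iff (n : ℕ) (hn : 0 < n) :
    Function.Bijective (caGlobal 2 3 1 n (fun v => 1 + v 0 + v 1 + v 2)) ↔ ¬ (3 ∣ n) := by
  haveI : NeZero n := ⟨hn.ne'⟩
  constructor
  · rintro hb h3
    -- counterexample: constant 0 and the pattern 0,1,1
    set f : ZMod n →+* ZMod 3 := ZMod.castHom h3 (ZMod 3)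
    set c' : ZMod n → Fin 2 := fun i => if f i = 0 then 0 else 1 with hc'
    have hG : caGlobal 2 3 1 n (fun v => 1 + v 0 + v 1 + v 2) c'
        = caGlobal 2 3 1 n (fun v => 1 + v 0 + v 1 + v 2) (fun _ => 0) := by
      funext i
      rw [caGlobal_apply, caGlobal_apply]
      have e1 : f (i - 1) = f i - 1 := by simp
      have e2 : f (i + 1) = f i + 1 := by simp
      simp only [hc', e1, e2]
      have key : ∀ x : ZMod 3,
          (1 : Fin 2) + (if x - 1 = 0 then 0 else 1) + (if x = 0 then 0 else 1)
            + (if x + 1 = 0 then 0 else 1) = 1 + 0 + 0 + 0 := by decide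
      exact key (f i)
    have := hb.injective hG
    have h1 : c' 1 = (0 : Fin 2) := by rw [this]
    have hf1 : f 1 = 1 := map_one f
    simp only [hc', hf1] at h1
    norm_num at h1
  · intro h3
    rw [← Finite.injective_iff_bijective]
    intro c c' h
    -- difference configuration
    set d : ZMod n → Fin 2 := fun i => c i + c' i with hd
    have hwin : ∀ i, d (i - 1) + d i + d (i + 1) = 0 := by
      intro i
      have hi := congrFun h i
      rw [caGlobal_apply, caGlobal_apply] at hi
      have key : ∀ a b e a' b' e' : Fin 2,
          1 + a + b + e = 1 + a' + b' + e' →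
          (a + a') + (b + b') + (e + e') = 0 := by decide
      exact key _ _ _ _ _ _ hi
    have hstep : ∀ i, d (i + 2) = d i + d (i + 1) := by
      intro i
      have := hwin (i + 1)
      have e1 : i + 1 - 1 = i := by ring
      rw [e1] at this
      have key : ∀ a b e : Fin 2, a + b + e = 0 → e = a + b := by decide
      have e2 : i + 1 + 1 = i + 2 := by ring
      rw [e2] at this
      exact key _ _ _ this
    have hper : ∀ i, d (i + 3) = d i := by
      intro i
      have h1 := hstep i
      have h2 := hstep (i + 1)
      have e2 : i + 1 + 1 = i + 2 := by ring
      have e3 : i + 1 + 2 = i + 3 := by ring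
      rw [e2, e3] at h2
      rw [h2, h1]
      have key : ∀ a b : Fin 2, b + (a + b) = a := by decide
      exact key _ _
    -- 3 is invertible mod n, so d is constant
    have hcop : Nat.Coprime 3 n := (Nat.Prime.coprime_iff_not_dvd (by norm_num)).2 h3
    have hunit : IsUnit (3 : ZMod n) := (ZMod.unitOfCoprime 3 hcop).isUnit
    have hiter : ∀ (k : ℕ) (i : ZMod n), d (i + 3 * k) = d i := by
      intro k
      induction k with
      | zero => simp
      | succ m ih =>
        intro i
        have : i + 3 * ((m + 1 : ℕ) : ZMod n) = (i + 3) + 3 * (m : ℕ) := by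
          push_cast; ring
        rw [this, ih, hper]
    have hconst : ∀ i : ZMod n, d i = d 0 := by
      intro i
      obtain ⟨u, hu⟩ := hunit
      have : (0 : ZMod n) + 3 * ((↑u⁻¹ * i : ZMod n).val : ZMod n) = i := by
        rw [ZMod.natCast_val, ZMod.cast_id]
        rw [zero_add, ← mul_assoc, ← hu]
        rw [← Units.val_mul, mul_inv_cancel, Units.val_one, one_mul]
      calc d i = d (0 + 3 * ((↑u⁻¹ * i : ZMod n).val : ZMod n)) := by rw [this]
        _ = d 0 := hiter _ 0
    have hd0 : d 0 = 0 := by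
      have := hwin 0
      rw [hconst (0 - 1), hconst (0 + 1)] at this
      have key : ∀ a : Fin 2, a + a + a = 0 → a = 0 := by decide
      exact key _ this
    funext i
    have : d i = 0 := by rw [hconst i, hd0]
    have key : ∀ a b : Fin 2, a + b = 0 → a = b := by decide
    exact key _ _ (by rw [← this])
end

section
/- If a local rule R : S^m → S is unbalanced (i.e., the preimage sizes |R^{-1}(s)| are not all equal to d^{m-1}), then for every n ≥ m the global function G_n under periodic boundary is not surjective (hence not bijective). -/
open Finset

theorem Finset.card_filter_comp_of_bijective {X : Type*} [Fintype X] {f : X → X}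
    (hf : Function.Bijective f) (p : X → Prop) [DecidablePred p] :
    #{x | p (f x)} = #{x | p x} := by
  simp only [← Fintype.card_subtype]
  exact Fintype.card_congr ((Equiv.ofBijective f hf).subtypeEquiv fun _ => Iff.rfl)

theorem Function.Embedding.card_filter_comp {α β S : Type*} [Fintype α] [Fintype β]
    [Fintype S] [DecidableEq α] [DecidableEq β] (e : α ↪ β) (P : (α → S) → Prop)
    [DecidablePred P] :
    #{c : β → S | P (c ∘ e)} =
      #{t | P t} * Fintype.card S ^ (Fintype.card β - Fintype.card α) := by
  let split : (β → S) ≃ (α → S) × ({x // x ∉ Set.range e} → S) :=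
    (Equiv.piEquivPiSubtypeProd (· ∈ Set.range e) _).trans
      ((Equiv.arrowCongr (Equiv.ofInjective e e.injective).symm (Equiv.refl S)).prodCongr
        (Equiv.refl _))
  simp only [← Fintype.card_subtype]
  calc Fintype.card {c : β → S // P (c ∘ e)}
      = Fintype.card ({t // P t} × ({x // x ∉ Set.range e} → S)) :=
        Fintype.card_congr ((split.subtypeEquiv (p := fun c => P (c ∘ e)) (q := fun p => P p.1)
          fun _ => Iff.rfl).trans Equiv.prodSubtypeFstEquivSubtypeProd)
    _ = _ := by
      rw [Fintype.card_prod, Fintype.card_fun, Fintype.card_subtype_compl,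
        Set.card_range_of_injective e.injective]

section caGlobal

variable {d m n : ℕ}

theorem surjective_of_surjective_caGlobal {lr : ℕ} {R : (Fin m → Fin d) → Fin d}
    (h : Function.Surjective (caGlobal d m lr n R)) : Function.Surjective R := fun s =>
  let ⟨_, hc⟩ := h fun _ => s
  ⟨_, congrFun hc 0⟩

def caWindow (lr : ℕ) (h : m ≤ n) : Fin m ↪ ZMod n where
  toFun k := ((k : ℕ) : ZMod n) - lr
  inj' k₁ k₂ hk := by
    have hval := congrArg ZMod.val (sub_left_injective hk)
    simp only [ZMod.val_natCast_of_lt (k₁.isLt.trans_le h),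
      ZMod.val_natCast_of_lt (k₂.isLt.trans_le h)] at hval
    exact Fin.ext hval

theorem caGlobal_apply_zero (lr : ℕ) (h : m ≤ n) (R : (Fin m → Fin d) → Fin d)
    (c : ZMod n → Fin d) : caGlobal d m lr n R c 0 = R (c ∘ caWindow lr h) := by
  simp only [caGlobal, zero_add]
  rfl

theorem card_filter_caGlobal_apply_zero [NeZero n] (lr : ℕ) (h : m ≤ n)
    (R : (Fin m → Fin d) → Fin d) (s : Fin d) :
    #{c | caGlobal d m lr n R c 0 = s} = #{t | R t = s} * d ^ (n - m) := by
  simp only [caGlobal_apply_zero lr h]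
  have := (caWindow lr h).card_filter_comp (R · = s)
  rwa [ZMod.card, Fintype.card_fin, Fintype.card_fin] at this

end caGlobal

/-- If the local rule is unbalanced (some state does not have exactly
`d^(m-1)` preimages), then `Gₙ` is not surjective for any `n ≥ m`. -/
theorem unbalanced_not_surjective
    (d m lr : ℕ) (R : (Fin m → Fin d) → Fin d)
    (hR : ¬ ∀ s : Fin d,
        (Finset.univ.filter (fun t : Fin m → Fin d => R t = s)).card = d ^ (m - 1)) :
    ∀ n : ℕ, m ≤ n → ¬ Function.Surjective (caGlobal d m lr n R) := by
  intro n hmn hsurj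
  apply hR
  intro s
  rcases Nat.eq_zero_or_pos m with rfl | hm
  · obtain ⟨t, rfl⟩ := surjective_of_surjective_caGlobal hsurj s
    rw [filter_true_of_mem fun t' _ => congrArg R (Subsingleton.elim t' t), card_univ,
      Fintype.card_fun]
    simp
  have : NeZero n := ⟨(hm.trans_le hmn).ne'⟩
  have hbij := Finite.surjective_iff_bijective.mp hsurj
  apply Nat.eq_of_mul_eq_mul_right (pow_pos (Fin.pos s) (n - m))
  calc #{t | R t = s} * d ^ (n - m)
      = #{c | caGlobal d m lr n R c 0 = s} := (card_filter_caGlobal_apply_zero lr hmn R s).symm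
    _ = #{c : ZMod n → Fin d | c 0 = s} := card_filter_comp_of_bijective hbij (· 0 = s)
    _ = d ^ (n - 1) := by
      simpa using Fintype.card_filter_piFinset_const_eq_of_mem univ (0 : ZMod n) (mem_univ s)
    _ = d ^ (m - 1) * d ^ (n - m) := by rw [← pow_add]; congr 1; omega
end
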